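/- arXiv:2410.06485 — 6 statements merged into one kernel-verified Lean document; each statement's English description precedes it below -/
import Mathlib

section
/- Suppose there exist an α₁-competitive randomized SPC strategy 𝒜 and an α₂-competitive randomized RSP strategy ℬ (with α₁, α₂ ≥ 0) for horizon T. Then the composed randomized algorithm that samples A ~ 𝒜 and B ~ ℬ independently and, on a request sequence σ₁,…,σ_m (m ≤ T), at each time t plays the server configuration B((σ₁,ℓ₁^A),…,(σ_t,ℓ_t^A)) where ℓ_t^A = A(σ₁,…,σ_t), serves every request with probability one and satisfies, for every request sequence σ of length m ≤ T, the expected-cost bound E_{A~𝒜, B~ℬ}[cost_w^B((σ₁,ℓ₁^A),…,(σ_m,ℓ_m^A))] ≤ α₁·α₂·OPT_w(σ). (This is the Composition Theorem: an α₁-competitive algorithm for Weighted k-Server – Service Pattern Construction and an α₂-competitive algorithm for Weighted k-Server – Revealed Service Pattern yield an (α₁α₂)-competitive algorithm for weighted k-server on uniform metrics.) -/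
open scoped ENNReal

/-- The levels `ℓ₁,…,ℓ_m` (encoding a hierarchical service pattern: level `j` starts a new
interval at each time `t` with `ℓ_t ≥ j`) are feasible w.r.t. the requests `σ₁,…,σ_m`:
there is a labeling `lab : {1,…,k} × {1,…,m} → U` with `lab j t = lab j (t-1)` whenever
`t ≥ 2` and `ℓ_t < j`, such that every request is covered by some level's label. -/
def FeasibleLevels (U : Type*) (k m : ℕ) (σ : ℕ → U) (ℓ : ℕ → ℕ) : Prop :=
  ∃ lab : ℕ → ℕ → U,
    (∀ j t, 1 ≤ j → j ≤ k → 2 ≤ t → t ≤ m → ℓ t < j → lab j t = lab j (t - 1)) ∧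
    (∀ t, 1 ≤ t → t ≤ m → ∃ j, 1 ≤ j ∧ j ≤ k ∧ lab j t = σ t)

/-- `cost_w(ℓ) = Σ_{t=1}^m Σ_{j=1}^{ℓ_t} w_j`, the cost of a hierarchical service pattern
encoded by extension levels `ℓ₁,…,ℓ_m`. -/
noncomputable def levelsCost (m : ℕ) (w : ℕ → ℝ) (ℓ : ℕ → ℕ) : ℝ :=
  ∑ t ∈ Finset.Icc 1 m, ∑ j ∈ Finset.Icc 1 (ℓ t), w j

/-- `OPT_w(σ)`: the optimum cost of a feasible hierarchical service pattern for the
request sequence `σ₁,…,σ_m`, over all level sequences with `ℓ₁ = k` and values in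
`{0,…,k}`. -/
noncomputable def OPTcost (U : Type*) (k m : ℕ) (w : ℕ → ℝ) (σ : ℕ → U) : ℝ :=
  sInf {c : ℝ | ∃ ℓ : ℕ → ℕ, ℓ 1 = k ∧ (∀ t, 1 ≤ t → t ≤ m → ℓ t ≤ k) ∧
    FeasibleLevels U k m σ ℓ ∧ c = levelsCost m w ℓ}

/-- A valid deterministic SPC strategy for horizon `T`: `A t σ` is the level
`ℓ_t = A(σ₁,…,σ_t)` output after the `t`-th request; it depends only on `σ₁,…,σ_t`
(online), satisfies `A(σ₁) = k` and `A(σ₁,…,σ_t) ∈ {0,…,k}`, and the produced level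
sequence is feasible w.r.t. every request sequence of every length `m ≤ T`. -/
def SPCValid (U : Type*) (k T : ℕ) (A : ℕ → (ℕ → U) → ℕ) : Prop :=
  (∀ t (σ σ' : ℕ → U), (∀ s, 1 ≤ s → s ≤ t → σ s = σ' s) → A t σ = A t σ') ∧
  (∀ σ : ℕ → U, A 1 σ = k) ∧
  (∀ t (σ : ℕ → U), 1 ≤ t → t ≤ T → A t σ ≤ k) ∧
  (∀ m (σ : ℕ → U), 1 ≤ m → m ≤ T → FeasibleLevels U k m σ fun t => A t σ)

/-- A valid deterministic RSP strategy for horizon `T`: `B t σ ℓ` is the configuration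
(a function `{1,…,k} → U`) played after the `t`-th input pair `(σ_t, ℓ_t)`; it depends
only on `(σ₁,ℓ₁),…,(σ_t,ℓ_t)` (online), and on every input of length `m ≤ T` with
`ℓ₁ = k`, levels in `{0,…,k}` and level sequence feasible w.r.t. the requests, every
request is served by some server. -/
def RSPValid (U : Type*) (k T : ℕ) (B : ℕ → (ℕ → U) → (ℕ → ℕ) → ℕ → U) : Prop :=
  (∀ t (σ σ' : ℕ → U) (ℓ ℓ' : ℕ → ℕ),
    (∀ s, 1 ≤ s → s ≤ t → σ s = σ' s ∧ ℓ s = ℓ' s) → B t σ ℓ = B t σ' ℓ') ∧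
  (∀ m (σ : ℕ → U) (ℓ : ℕ → ℕ), 1 ≤ m → m ≤ T → ℓ 1 = k →
    (∀ t, 1 ≤ t → t ≤ m → ℓ t ≤ k) → FeasibleLevels U k m σ ℓ →
    ∀ t, 1 ≤ t → t ≤ m → ∃ j, 1 ≤ j ∧ j ≤ k ∧ B t σ ℓ j = σ t)

/-- `cost_w^B` on the input `(σ₁,ℓ₁),…,(σ_m,ℓ_m)`: all `k` servers are charged at `t = 1`,
and afterwards server `j` is charged `w_j` at each time `t ∈ {2,…,m}` at which its
position changes. -/
noncomputable def RSPcost (U : Type*) [DecidableEq U] (k m : ℕ) (w : ℕ → ℝ)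
    (B : ℕ → (ℕ → U) → (ℕ → ℕ) → ℕ → U) (σ : ℕ → U) (ℓ : ℕ → ℕ) : ℝ :=
  (∑ j ∈ Finset.Icc 1 k, w j) +
    ∑ t ∈ Finset.Icc 2 m, ∑ j ∈ Finset.Icc 1 k,
      if B t σ ℓ j ≠ B (t - 1) σ ℓ j then w j else 0

/-- Composition Theorem: if `𝒜` is an `α₁`-competitive randomized SPC strategy and `ℬ` is
an `α₂`-competitive randomized RSP strategy (both PMFs supported on valid deterministic
strategies for horizon `T`, with `α₁, α₂ ≥ 0`), then the composed randomized algorithm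
that samples `A ∼ 𝒜` and `B ∼ ℬ` independently and at each time `t` plays the
configuration `B((σ₁,ℓ₁^A),…,(σ_t,ℓ_t^A))` with `ℓ_t^A = A(σ₁,…,σ_t)`, serves every
request with probability one, and its expected cost on every request sequence of length
`m ≤ T` is at most `α₁·α₂·OPT_w(σ)`. -/
theorem composition_theorem
    (U : Type*) [Fintype U] [Nonempty U] [DecidableEq U]
    (k T : ℕ) (hk : 1 ≤ k) (hT : 1 ≤ T)
    (w : ℕ → ℝ) (hw : ∀ j, 1 ≤ j → j ≤ k → 0 ≤ w j)
    (α₁ α₂ : ℝ) (hα₁ : 0 ≤ α₁) (hα₂ : 0 ≤ α₂)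
    (𝒜 : PMF (ℕ → (ℕ → U) → ℕ))
    (h𝒜valid : ∀ A ∈ 𝒜.support, SPCValid U k T A)
    (h𝒜comp : ∀ m (σ : ℕ → U), 1 ≤ m → m ≤ T →
      (∑' A, 𝒜 A * ENNReal.ofReal (levelsCost m w fun t => A t σ)) ≤
        ENNReal.ofReal (α₁ * OPTcost U k m w σ))
    (ℬ : PMF (ℕ → (ℕ → U) → (ℕ → ℕ) → ℕ → U))
    (hℬvalid : ∀ B ∈ ℬ.support, RSPValid U k T B)
    (hℬcomp : ∀ m (σ : ℕ → U) (ℓ : ℕ → ℕ), 1 ≤ m → m ≤ T → ℓ 1 = k →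
      (∀ t, 1 ≤ t → t ≤ m → ℓ t ≤ k) → FeasibleLevels U k m σ ℓ →
      (∑' B, ℬ B * ENNReal.ofReal (RSPcost U k m w B σ ℓ)) ≤
        ENNReal.ofReal (α₂ * levelsCost m w ℓ)) :
    ∀ m (σ : ℕ → U), 1 ≤ m → m ≤ T →
      (∀ A ∈ 𝒜.support, ∀ B ∈ ℬ.support, ∀ t, 1 ≤ t → t ≤ m →
        ∃ j, 1 ≤ j ∧ j ≤ k ∧ B t σ (fun s => A s σ) j = σ t) ∧
      (∑' A, ∑' B, 𝒜 A * ℬ B *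
          ENNReal.ofReal (RSPcost U k m w B σ fun s => A s σ)) ≤
        ENNReal.ofReal (α₁ * α₂ * OPTcost U k m w σ) := by
  intro m σ hm hmT
  constructor
  · intro A hA B hB t ht htm
    obtain ⟨hAon, hA1, hAk, hAfeas⟩ := h𝒜valid A hA
    obtain ⟨hBon, hBserve⟩ := hℬvalid B hB
    exact hBserve m σ (fun s => A s σ) hm hmT (hA1 σ)
      (fun t ht htm => hAk t σ ht (le_trans htm hmT)) (hAfeas m σ hm hmT) t ht htm
  · calc ∑' A, ∑' B, 𝒜 A * ℬ B * ENNReal.ofReal (RSPcost U k m w B σ fun s => A s σ)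
        = ∑' A, 𝒜 A * ∑' B, ℬ B * ENNReal.ofReal (RSPcost U k m w B σ fun s => A s σ) := by
          apply tsum_congr; intro A
          rw [← ENNReal.tsum_mul_left]
          apply tsum_congr; intro B; ring
      _ ≤ ∑' A, 𝒜 A * ENNReal.ofReal (α₂ * levelsCost m w fun s => A s σ) := by
          apply ENNReal.tsum_le_tsum
          intro A
          by_cases hA : A ∈ 𝒜.support
          · refine mul_le_mul_right ?_ _
            obtain ⟨hAon, hA1, hAk, hAfeas⟩ := h𝒜valid A hA
            exact hℬcomp m σ _ hm hmT (hA1 σ)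
              (fun t ht htm => hAk t σ ht (le_trans htm hmT)) (hAfeas m σ hm hmT)
          · have : 𝒜 A = 0 := (PMF.apply_eq_zero_iff 𝒜 A).mpr hA
            simp [this]
      _ = ENNReal.ofReal α₂ * ∑' A, 𝒜 A * ENNReal.ofReal (levelsCost m w fun s => A s σ) := by
          rw [← ENNReal.tsum_mul_left]
          apply tsum_congr; intro A
          rw [ENNReal.ofReal_mul hα₂]; ring
      _ ≤ ENNReal.ofReal α₂ * ENNReal.ofReal (α₁ * OPTcost U k m w σ) :=
          mul_le_mul_right (h𝒜comp m σ hm hmT) _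
      _ = ENNReal.ofReal (α₁ * α₂ * OPTcost U k m w σ) := by
          rw [← ENNReal.ofReal_mul hα₂]; ring_nf
end

section
/- Generalized Dichotomy Property: Let n ≥ 1 and ℓ ∈ {1,…,k}. Assume the dichotomy property at level ℓ with constant n: for every m ≥ 1, every request sequence σ ∈ U^m, every subset S ⊆ {1,…,m}, every ℓ-level hierarchical service pattern 𝓙 over {1,…,m}, and every interval I in the top level 𝓙^ℓ, the set of points γ(I) over all labelings γ of 𝓙 such that for every t ∈ S some interval of 𝓙 containing t is labeled σ_t, is either all of U or has at most n elements. Then for every T ≥ 1, every request sequence ρ = (σ₁,…,σ_T) ∈ U^T, every k-level hierarchical service pattern 𝓘 over {1,…,T}, and all points p^{ℓ+1},…,p^k ∈ U, the set Q^ℓ(p^{ℓ+1},…,p^k) is either all of U or has at most n elements. -/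
/-- A `k`-level service pattern over times `{1,…,T}` is encoded by `start ℓ t`, which says
that a new interval of level `ℓ` begins at time `t`; each level starts an interval at
time `1`. -/
def IsPattern (k : ℕ) (start : ℕ → ℕ → Prop) : Prop :=
  ∀ ℓ, 1 ≤ ℓ → ℓ ≤ k → start ℓ 1

/-- A `k`-level service pattern over `{1,…,T}` is hierarchical if each level refines the
next one. -/
def Hierarchical (k T : ℕ) (start : ℕ → ℕ → Prop) : Prop :=
  ∀ ℓ t, 1 ≤ ℓ → ℓ < k → 1 ≤ t → t ≤ T → start (ℓ + 1) t → start ℓ t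

/-- A labeling of a `k`-level pattern over `{1,…,T}` assigns a point of `U` to each level
at each time, constant on each interval of each level. -/
def IsLabeling {U : Type*} (k T : ℕ) (start : ℕ → ℕ → Prop) (lab : ℕ → ℕ → U) : Prop :=
  ∀ ℓ t, 1 ≤ ℓ → ℓ ≤ k → 2 ≤ t → t ≤ T → ¬ start ℓ t → lab ℓ t = lab ℓ (t - 1)

/-- The set of labels `γ(I)` of the interval `I` of the top level `ℓ` containing the time
`t₀`, over all labelings `γ` of an `ℓ`-level pattern over `{1,…,m}` such that for every
`t ∈ S` some interval of the pattern containing `t` is labeled `σ_t`. -/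
def labelSet (U : Type*) (ℓ m : ℕ) (start : ℕ → ℕ → Prop) (σ : ℕ → U) (S : Set ℕ)
    (t₀ : ℕ) : Set U :=
  {x | ∃ lab : ℕ → ℕ → U, IsLabeling ℓ m start lab ∧
    (∀ t ∈ S, ∃ j, 1 ≤ j ∧ j ≤ ℓ ∧ lab j t = σ t) ∧ lab ℓ t₀ = x}

/-- The dichotomy property at level `ℓ` with constant `n`: for every `m ≥ 1`, every request
sequence `σ`, every `S ⊆ {1,…,m}`, every `ℓ`-level hierarchical service pattern over
`{1,…,m}`, and every interval of the top level (given by a time `t₀ ∈ {1,…,m}` it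
contains), the corresponding set of labels is either all of `U` or has at most `n`
elements. -/
def DichotomyAt (U : Type*) (ℓ n : ℕ) : Prop :=
  ∀ m, 1 ≤ m → ∀ σ : ℕ → U, ∀ S : Set ℕ, S ⊆ Set.Icc 1 m →
    ∀ start : ℕ → ℕ → Prop, IsPattern ℓ start → Hierarchical ℓ m start →
      ∀ t₀, 1 ≤ t₀ → t₀ ≤ m →
        labelSet U ℓ m start σ S t₀ = Set.univ ∨
          ((labelSet U ℓ m start σ S t₀).Finite ∧
            (labelSet U ℓ m start σ S t₀).ncard ≤ n)

/-- `Qset U k T start σ ℓ p` is the set `Q^ℓ(p^{ℓ+1},…,p^k)` of points `q ∈ U` for which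
some feasible labeling of the pattern w.r.t. `σ₁,…,σ_T` labels the last interval of level
`ℓ` with `q` and the last interval of level `i` with `p i` for all `i ∈ {ℓ+1,…,k}`. -/
def Qset (U : Type*) (k T : ℕ) (start : ℕ → ℕ → Prop) (σ : ℕ → U) (ℓ : ℕ) (p : ℕ → U) :
    Set U :=
  {q | ∃ lab : ℕ → ℕ → U, IsLabeling k T start lab ∧
    (∀ t, 1 ≤ t → t ≤ T → ∃ j, 1 ≤ j ∧ j ≤ k ∧ lab j t = σ t) ∧
    lab ℓ T = q ∧ (∀ i, ℓ < i → i ≤ k → lab i T = p i)}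

/-- Auxiliary: in a hierarchical pattern, a start at a higher level is a start at any
lower (positive) level. -/
theorem startChain {k T : ℕ} {start : ℕ → ℕ → Prop} (hhier : Hierarchical k T start) :
    ∀ i j t, 1 ≤ j → j ≤ i → i ≤ k → 1 ≤ t → t ≤ T → start i t → start j t := by
  intro i
  induction i with
  | zero => intro j t h1 h2 _ _ _ _; exact absurd h2 (by omega)
  | succ i ih =>
    intro j t h1 h2 hik ht1 htT hs
    rcases Nat.lt_or_ge j (i + 1) with h | h
    · have hi : start i t := hhier i t (by omega) (by omega) ht1 htT hs
      exact ih j t h1 (by omega) (by omega) ht1 htT hi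
    · have hji : j = i + 1 := by omega
      rw [hji]; exact hs

/-- Auxiliary: a labeling is constant from `t` to `T` at level `j` if no interval of
level `j` starts in `(t, T]`. -/
theorem labelConst {U : Type*} {k T : ℕ} {start : ℕ → ℕ → Prop} {lab : ℕ → ℕ → U}
    (hlab : IsLabeling k T start lab) (j : ℕ) (hj1 : 1 ≤ j) (hjk : j ≤ k) :
    ∀ t, 1 ≤ t → t ≤ T → (∀ t', t < t' → t' ≤ T → ¬ start j t') → lab j T = lab j t := by
  intro t ht1 htT hno
  have key : ∀ s, t ≤ s → s ≤ T → lab j s = lab j t := by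
    intro s hs
    induction s, hs using Nat.le_induction with
    | base => intro _; rfl
    | succ s hts ih =>
      intro hsT
      have h1 : lab j (s + 1) = lab j (s + 1 - 1) :=
        hlab j (s + 1) hj1 hjk (by omega) hsT (hno (s + 1) (by omega) hsT)
      have h2 : lab j s = lab j t := ih (by omega)
      simpa using h1.trans h2
  exact key T (by omega) le_rfl

/-- Generalized Dichotomy Property: if the dichotomy property holds at level `ℓ ∈ {1,…,k}`
with constant `n ≥ 1`, then for every `T ≥ 1`, every request sequence `σ₁,…,σ_T`, every
`k`-level hierarchical service pattern over `{1,…,T}`, and all points `p^{ℓ+1},…,p^k`, the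
set `Q^ℓ(p^{ℓ+1},…,p^k)` is either all of `U` or has at most `n` elements. -/
theorem generalized_dichotomy {U : Type*} (k : ℕ) (hk : 1 ≤ k)
    (n : ℕ) (hn : 1 ≤ n) (ℓ : ℕ) (hℓ1 : 1 ≤ ℓ) (hℓk : ℓ ≤ k)
    (hdich : DichotomyAt U ℓ n)
    (T : ℕ) (hT : 1 ≤ T) (σ : ℕ → U) (start : ℕ → ℕ → Prop)
    (hpat : IsPattern k start) (hhier : Hierarchical k T start)
    (p : ℕ → U) :
    Qset U k T start σ ℓ p = Set.univ ∨
      ((Qset U k T start σ ℓ p).Finite ∧ (Qset U k T start σ ℓ p).ncard ≤ n) := by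
  classical
  -- The set of times that must be served at level ≤ ℓ: times in the last interval of
  -- level ℓ whose request differs from all the fixed labels p i, i > ℓ.
  set S : Set ℕ := {t | 1 ≤ t ∧ t ≤ T ∧ (∀ t', t < t' → t' ≤ T → ¬ start ℓ t') ∧
      ∀ i, ℓ < i → i ≤ k → σ t ≠ p i} with hSdef
  have hSsub : S ⊆ Set.Icc 1 T := fun t ht => ⟨ht.1, ht.2.1⟩
  have hpatℓ : IsPattern ℓ start := fun j h1 h2 => hpat j h1 (h2.trans hℓk)
  have hhierℓ : Hierarchical ℓ T start := fun j t h1 h2 h3 h4 h5 =>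
    hhier j t h1 (lt_of_lt_of_le h2 hℓk) h3 h4 h5
  have hdich' := hdich T hT σ S hSsub start hpatℓ hhierℓ T hT le_rfl
  -- Qset ⊆ labelSet
  have hsub : Qset U k T start σ ℓ p ⊆ labelSet U ℓ T start σ S T := by
    rintro q ⟨lab, hlab, hserve, hlabT, hp⟩
    refine ⟨lab, ?_, ?_, hlabT⟩
    · intro j t h1 h2 h3 h4 h5
      exact hlab j t h1 (h2.trans hℓk) h3 h4 h5
    · intro t ht
      obtain ⟨ht1, htT, hno, hne⟩ := ht
      obtain ⟨j, hj1, hjk, hj⟩ := hserve t ht1 htT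
      refine ⟨j, hj1, ?_, hj⟩
      by_contra hjl
      push_neg at hjl
      have hnoj : ∀ t', t < t' → t' ≤ T → ¬ start j t' := by
        intro t' h5 h6 hs
        exact hno t' h5 h6 (startChain hhier j ℓ t' hℓ1 (le_of_lt hjl) hjk (by omega) h6 hs)
      have hconst : lab j T = lab j t := labelConst hlab j hj1 hjk t ht1 htT hnoj
      exact hne j hjl hjk (by rw [← hj, ← hconst, hp j hjl hjk])
  rcases Set.eq_empty_or_nonempty (Qset U k T start σ ℓ p) with hemp | ⟨q₀, hq₀⟩
  · right
    rw [hemp]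
    exact ⟨Set.finite_empty, by simp⟩
  · obtain ⟨lab₀, hlab₀, hserve₀, hlab₀T, hp₀⟩ := hq₀
    -- labelSet ⊆ Qset, using the witness labeling lab₀ outside the last interval
    have hsup : labelSet U ℓ T start σ S T ⊆ Qset U k T start σ ℓ p := by
      rintro x ⟨lab', hlab', hserve', hlab'T⟩
      set InL : ℕ → Prop := fun t => ∀ t', t < t' → t' ≤ T → ¬ start ℓ t' with hInLdef
      have hInLT : InL T := fun t' h1 h2 => absurd (lt_of_lt_of_le h1 h2) (lt_irrefl T)
      have hInLmono : ∀ t, 2 ≤ t → InL (t - 1) → InL t := by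
        intro t _ h t' h1 h2
        exact h t' (by omega) h2
      refine ⟨fun j t => if j ≤ ℓ ∧ InL t then lab' j t else lab₀ j t, ?_, ?_, ?_, ?_⟩
      · -- IsLabeling
        intro j t h1 hjk h2 hT' hns
        dsimp only
        rcases Nat.lt_or_ge ℓ j with hjl | hjl
        · rw [if_neg (fun h => absurd h.1 (by omega)),
            if_neg (fun h => absurd h.1 (by omega))]
          exact hlab₀ j t h1 hjk h2 hT' hns
        · by_cases hin : InL t
          · by_cases hin' : InL (t - 1)
            · rw [if_pos ⟨hjl, hin⟩, if_pos ⟨hjl, hin'⟩]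
              exact hlab' j t h1 hjl h2 hT' hns
            · exfalso
              obtain ⟨t', ht'1, ht'2, ht's⟩ : ∃ t', t - 1 < t' ∧ t' ≤ T ∧ start ℓ t' := by
                by_contra hc
                push_neg at hc
                exact hin' (fun t' ha hb => hc t' ha hb)
              have ht't : t' = t := by
                by_contra hne'
                exact hin t' (by omega) ht'2 ht's
              rw [ht't] at ht's
              exact hns (startChain hhier ℓ j t h1 hjl hℓk (by omega) hT' ht's)
          · have hin' : ¬ InL (t - 1) := fun h => hin (hInLmono t h2 h)
            rw [if_neg (fun h => hin h.2), if_neg (fun h => hin' h.2)]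
            exact hlab₀ j t h1 hjk h2 hT' hns
      · -- feasibility
        intro t ht1 htT
        dsimp only
        by_cases hin : InL t
        · by_cases hS' : ∀ i, ℓ < i → i ≤ k → σ t ≠ p i
          · obtain ⟨j, hj1, hjℓ, hj⟩ := hserve' t ⟨ht1, htT, hin, hS'⟩
            exact ⟨j, hj1, hjℓ.trans hℓk, by rw [if_pos ⟨hjℓ, hin⟩]; exact hj⟩
          · push_neg at hS'
            obtain ⟨i, hi1, hik, hσp⟩ := hS'
            have hnoi : ∀ t', t < t' → t' ≤ T → ¬ start i t' := by
              intro t' h5 h6 hs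
              exact hin t' h5 h6 (startChain hhier i ℓ t' hℓ1 (le_of_lt hi1) hik (by omega) h6 hs)
            have hconst : lab₀ i T = lab₀ i t :=
              labelConst hlab₀ i (by omega) hik t ht1 htT hnoi
            refine ⟨i, by omega, hik, ?_⟩
            rw [if_neg (fun h => absurd h.1 (by omega)), ← hconst, hp₀ i hi1 hik, ← hσp]
        · obtain ⟨j, hj1, hjk, hj⟩ := hserve₀ t ht1 htT
          exact ⟨j, hj1, hjk, by rw [if_neg (fun h => hin h.2)]; exact hj⟩
      · -- value at level ℓ at time T
        dsimp only
        rw [if_pos ⟨le_rfl, hInLT⟩]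
        exact hlab'T
      · -- values at levels > ℓ at time T
        intro i hi1 hik
        dsimp only
        rw [if_neg (fun h => absurd h.1 (by omega))]
        exact hp₀ i hi1 hik
    have heq : Qset U k T start σ ℓ p = labelSet U ℓ T start σ S T :=
      Set.Subset.antisymm hsub hsup
    rcases hdich' with h | h
    · left; rw [heq, h]
    · right; rw [heq]; exact h
end

section
/- Monotonicity of feasible-label sets under extension: Let T ≥ 2, let ρ = (σ₁,…,σ_T) ∈ U^T, let 𝓘' be a k-level hierarchical service pattern over {1,…,T−1}, and let 𝓘 be the ℓ'-extension of 𝓘' for some ℓ' ∈ {0,…,k}. Then for every ℓ ∈ {ℓ'+1,…,k} and all points p^{ℓ+1},…,p^k ∈ U, the set Q^ℓ(p^{ℓ+1},…,p^k) computed from 𝓘 and ρ is contained in the set Q^ℓ(p^{ℓ+1},…,p^k) computed from 𝓘' and the prefix (σ₁,…,σ_{T−1}). -/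
/-- The `ℓ'`-extension of a pattern over `{1,…,T-1}` to a pattern over `{1,…,T}`:
levels `1,…,ℓ'` start a new (singleton) interval at time `T`, while the last interval of
each of the levels `ℓ' + 1,…,k` is enlarged to include `T`. -/
def extensionOf (T : ℕ) (start : ℕ → ℕ → Prop) (ℓ' : ℕ) : ℕ → ℕ → Prop :=
  fun ℓ t => if t = T then ℓ ≤ ℓ' else start ℓ t

/-- Monotonicity of feasible-label sets under extension: if `T ≥ 2`, `𝓘'` is a `k`-level
hierarchical service pattern over `{1,…,T-1}` and `𝓘` is its `ℓ'`-extension, then for every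
`ℓ ∈ {ℓ'+1,…,k}` and all points `p^{ℓ+1},…,p^k`, the set `Q^ℓ(p^{ℓ+1},…,p^k)` computed
from `𝓘` and `σ₁,…,σ_T` is contained in the one computed from `𝓘'` and `σ₁,…,σ_{T-1}`. -/
theorem qset_extension_subset {U : Type*} (k : ℕ) (hk : 1 ≤ k)
    (T : ℕ) (hT : 2 ≤ T) (σ : ℕ → U)
    (start : ℕ → ℕ → Prop) (hpat : IsPattern k start)
    (hhier : Hierarchical k (T - 1) start)
    (ℓ' : ℕ) (hℓ'k : ℓ' ≤ k)
    (ℓ : ℕ) (hℓ'ℓ : ℓ' < ℓ) (hℓk : ℓ ≤ k) (p : ℕ → U) :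
    Qset U k T (extensionOf T start ℓ') σ ℓ p ⊆ Qset U k (T - 1) start σ ℓ p := by
  rintro q ⟨lab, hlab, hfeas, hq, hp⟩
  have key : ∀ i, ℓ ≤ i → i ≤ k → lab i T = lab i (T - 1) := by
    intro i hi hik
    apply hlab i T (by omega) hik hT le_rfl
    intro h
    rw [show extensionOf T start ℓ' i T = (i ≤ ℓ') from if_pos rfl] at h
    omega
  refine ⟨lab, ?_, ?_, ?_, ?_⟩
  · intro j t hj hjk ht htT hns
    exact hlab j t hj hjk ht (by omega) (by
      simpa only [show extensionOf T start ℓ' j t = start j t from if_neg (by omega : t ≠ T)]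
        using hns)
  · intro t ht htT
    exact hfeas t ht (by omega)
  · rw [← key ℓ le_rfl hℓk, hq]
  · intro i hi hik
    rw [← key i (le_of_lt hi) hik]
    exact hp i hi hik
end

section
/- Hierarchization with factor k: Let U be a set, σ = (σ₁,…,σ_T) ∈ U^T a request sequence, and 0 ≤ w₁ ≤ w₂ ≤ ⋯ ≤ w_k nondecreasing nonnegative real weights. For a k-level service pattern 𝓘 define cost_w(𝓘) = Σ_{ℓ=1}^k w_ℓ · |𝓘^ℓ|, where |𝓘^ℓ| is the number of intervals in level ℓ. If 𝓘 is a (not necessarily hierarchical) k-level service pattern over {1,…,T} that is feasible with respect to σ, then there exists a hierarchical k-level service pattern 𝓘' over {1,…,T} that is feasible with respect to σ and satisfies cost_w(𝓘') ≤ k · cost_w(𝓘). -/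
/-- A pattern is feasible w.r.t. the request sequence `σ₁,…,σ_T` if it admits a labeling
such that at every time `t ∈ {1,…,T}` the interval of some level containing `t` is labeled
`σ_t`. -/
def FeasiblePattern (U : Type*) (k T : ℕ) (start : ℕ → ℕ → Prop) (σ : ℕ → U) : Prop :=
  ∃ lab : ℕ → ℕ → U, IsLabeling k T start lab ∧
    ∀ t, 1 ≤ t → t ≤ T → ∃ j, 1 ≤ j ∧ j ≤ k ∧ lab j t = σ t

/-- `cost_w(𝓘) = Σ_{ℓ=1}^k w_ℓ · |𝓘^ℓ|`, where `|𝓘^ℓ|` is the number of intervals of level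
`ℓ`, i.e. the number of times `t ∈ {1,…,T}` at which an interval of level `ℓ` starts. -/
noncomputable def patternCost (k T : ℕ) (w : ℕ → ℝ) (start : ℕ → ℕ → Prop) : ℝ :=
  ∑ ℓ ∈ Finset.Icc 1 k, w ℓ * ({t : ℕ | 1 ≤ t ∧ t ≤ T ∧ start ℓ t}.ncard : ℝ)

/-!
Let level `ℓ` of the new pattern start an interval wherever some level `j ≥ ℓ` of the old
one does. Level `ℓ` then refines every level above it, and since intervals are only cut
further, the old labeling remains feasible. Each new level `ℓ` has at most `∑_{j ≥ ℓ} |𝓘^j|`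
intervals, each of weight `w_ℓ ≤ w_j`, so it costs at most `cost_w(𝓘)`; there are `k` levels.
-/

def hierarchize (k : ℕ) (start : ℕ → ℕ → Prop) : ℕ → ℕ → Prop :=
  fun ℓ t => ∃ j, ℓ ≤ j ∧ j ≤ k ∧ start j t

section

variable {k T : ℕ} {start : ℕ → ℕ → Prop}

theorem IsPattern.hierarchize (h : IsPattern k start) : IsPattern k (hierarchize k start) :=
  fun ℓ h1 hk => ⟨ℓ, le_rfl, hk, h ℓ h1 hk⟩

theorem hierarchical_hierarchize : Hierarchical k T (hierarchize k start) := by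
  rintro ℓ t - - - - ⟨j, hj, hjk, hs⟩
  exact ⟨j, by omega, hjk, hs⟩

theorem FeasiblePattern.mono {U : Type*} {σ : ℕ → U} {start' : ℕ → ℕ → Prop}
    (hle : ∀ ℓ t, 1 ≤ ℓ → ℓ ≤ k → start ℓ t → start' ℓ t)
    (hfeas : FeasiblePattern U k T start σ) : FeasiblePattern U k T start' σ := by
  obtain ⟨lab, hlab, hcov⟩ := hfeas
  exact ⟨lab, fun ℓ t h1 hk h2 hT hns => hlab ℓ t h1 hk h2 hT (mt (hle ℓ t h1 hk) hns), hcov⟩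

theorem ncard_hierarchize_le (ℓ : ℕ) :
    {t : ℕ | 1 ≤ t ∧ t ≤ T ∧ hierarchize k start ℓ t}.ncard ≤
      ∑ j ∈ Finset.Icc ℓ k, {t : ℕ | 1 ≤ t ∧ t ≤ T ∧ start j t}.ncard := by
  convert (Finset.Icc ℓ k).set_ncard_biUnion_le fun j => {t : ℕ | 1 ≤ t ∧ t ≤ T ∧ start j t}
  ext t
  simp only [hierarchize, Set.mem_ofPred_eq, Set.mem_iUnion, Finset.mem_Icc, exists_prop]
  grind

theorem weighted_ncard_hierarchize_le_patternCost {w : ℕ → ℝ}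
    (hw0 : ∀ j, 1 ≤ j → j ≤ k → 0 ≤ w j) (hwmono : MonotoneOn w (Set.Icc 1 k))
    {ℓ : ℕ} (hℓ : ℓ ∈ Finset.Icc 1 k) :
    w ℓ * ({t : ℕ | 1 ≤ t ∧ t ≤ T ∧ hierarchize k start ℓ t}.ncard : ℝ) ≤
      patternCost k T w start := by
  rw [Finset.mem_Icc] at hℓ
  set n : ℕ → ℝ := fun j => ({t : ℕ | 1 ≤ t ∧ t ≤ T ∧ start j t}.ncard : ℝ)
  calc w ℓ * ({t : ℕ | 1 ≤ t ∧ t ≤ T ∧ hierarchize k start ℓ t}.ncard : ℝ)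
      ≤ w ℓ * ∑ j ∈ Finset.Icc ℓ k, n j := by
        gcongr
        · exact hw0 ℓ hℓ.1 hℓ.2
        · simp only [n, ← Nat.cast_sum]
          exact_mod_cast ncard_hierarchize_le ℓ
    _ = ∑ j ∈ Finset.Icc ℓ k, w ℓ * n j := Finset.mul_sum _ _ _
    _ ≤ ∑ j ∈ Finset.Icc ℓ k, w j * n j := by
        refine Finset.sum_le_sum fun j hj => ?_
        rw [Finset.mem_Icc] at hj
        gcongr
        exact hwmono ⟨hℓ.1, hℓ.2⟩ ⟨by omega, hj.2⟩ hj.1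
    _ ≤ ∑ j ∈ Finset.Icc 1 k, w j * n j := by
        refine Finset.sum_le_sum_of_subset_of_nonneg (Finset.Icc_subset_Icc_left hℓ.1) ?_
        intro j hj _
        rw [Finset.mem_Icc] at hj
        exact mul_nonneg (hw0 j hj.1 hj.2) (Nat.cast_nonneg _)

theorem patternCost_hierarchize_le {w : ℕ → ℝ}
    (hw0 : ∀ j, 1 ≤ j → j ≤ k → 0 ≤ w j) (hwmono : MonotoneOn w (Set.Icc 1 k)) :
    patternCost k T w (hierarchize k start) ≤ k * patternCost k T w start :=
  calc patternCost k T w (hierarchize k start)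
      ≤ ∑ _ℓ ∈ Finset.Icc 1 k, patternCost k T w start :=
        Finset.sum_le_sum fun _ hℓ => weighted_ncard_hierarchize_le_patternCost hw0 hwmono hℓ
    _ = k * patternCost k T w start := by simp

end

theorem hierarchization_general {U : Type*} (k : ℕ) (T : ℕ)
    (σ : ℕ → U) (w : ℕ → ℝ)
    (hw0 : ∀ j, 1 ≤ j → j ≤ k → 0 ≤ w j)
    (hwmono : ∀ j, 1 ≤ j → j < k → w j ≤ w (j + 1))
    (start : ℕ → ℕ → Prop) (hpat : IsPattern k start)
    (hfeas : FeasiblePattern U k T start σ) :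
    ∃ start' : ℕ → ℕ → Prop, IsPattern k start' ∧ Hierarchical k T start' ∧
      FeasiblePattern U k T start' σ ∧
      patternCost k T w start' ≤ k * patternCost k T w start := by
  have hmono : MonotoneOn w (Set.Icc 1 k) :=
    monotoneOn_of_le_add_one Set.ordConnected_Icc fun j _ hj hj1 => hwmono j hj.1 hj1.2
  exact ⟨hierarchize k start, hpat.hierarchize, hierarchical_hierarchize,
    hfeas.mono fun ℓ t _ hk hs => ⟨ℓ, le_rfl, hk, hs⟩, patternCost_hierarchize_le hw0 hmono⟩

/-- Hierarchization with factor `k`: for nondecreasing nonnegative weights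
`0 ≤ w₁ ≤ ⋯ ≤ w_k`, every (not necessarily hierarchical) `k`-level service pattern over
`{1,…,T}` feasible w.r.t. `σ` admits a hierarchical `k`-level service pattern over
`{1,…,T}` feasible w.r.t. `σ` of cost at most `k` times larger. -/
theorem hierarchization {U : Type*} (k : ℕ) (hk : 1 ≤ k) (T : ℕ) (hT : 1 ≤ T)
    (σ : ℕ → U) (w : ℕ → ℝ)
    (hw0 : ∀ j, 1 ≤ j → j ≤ k → 0 ≤ w j)
    (hwmono : ∀ j, 1 ≤ j → j < k → w j ≤ w (j + 1))
    (start : ℕ → ℕ → Prop) (hpat : IsPattern k start)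
    (hfeas : FeasiblePattern U k T start σ) :
    ∃ start' : ℕ → ℕ → Prop, IsPattern k start' ∧ Hierarchical k T start' ∧
      FeasiblePattern U k T start' σ ∧
      patternCost k T w start' ≤ k * patternCost k T w start :=
  hierarchization_general k T σ w hw0 hwmono start hpat hfeas
end

section
/- Telescoping bound for decreasing chains of finite sets: Let n ≥ 1 be a natural number and let Q₀ ⊇ Q₁ ⊇ ⋯ ⊇ Q_m be a decreasing chain of nonempty finite sets such that for every j ∈ {1,…,m}, either Q_j = Q_{j−1} or |Q_j| ≤ n. Then Σ_{j=1}^m (|Q_{j−1}| − |Q_j|)/|Q_{j−1}| ≤ H(n). -/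
/-!
Measure each set of the chain by the potential `ψ = chainPotential n` of its size, which equals
`H` up to `n` and is `H n + 1 - n / x` beyond `n`.  A step of the chain from size `a` down to size `b ≤ n` costs
`(a - b) / a ≤ ψ a - ψ b`, since each of the `a - b` reciprocals `1 / i` with `b < i ≤ min a n`
is at least `1 / a`, and the part of the drop above `n` is paid by `1 - n / a`.  The sum
therefore telescopes to at most `ψ |Q₀| - ψ |Q_m| ≤ (H n + 1) - 1`.
-/

noncomputable def H (n : ℕ) : ℝ := ∑ i ∈ Finset.Icc 1 n, (1 : ℝ) / i

open Finset

theorem sum_Icc_one_le_sub_of_le_sub {M : Type*} [AddCommGroup M] [PartialOrder M]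
    [IsOrderedAddMonoid M] {f g : ℕ → M} {m : ℕ}
    (h : ∀ j ∈ Icc 1 m, f j ≤ g (j - 1) - g j) :
    ∑ j ∈ Icc 1 m, f j ≤ g 0 - g m := by
  have telescope : ∀ k, ∑ j ∈ Icc 1 k, (g (j - 1) - g j) = g 0 - g k := by
    intro k
    induction k with
    | zero => simp
    | succ k ih =>
      rw [sum_Icc_succ_top (by omega), ih, Nat.add_sub_cancel]
      abel
  exact (sum_le_sum h).trans_eq (telescope m)

@[simp]
theorem H_zero : H 0 = 0 := by simp [H]

theorem H_sub_H_eq_sum_Ioc {b c : ℕ} (hbc : b ≤ c) : H c - H b = ∑ i ∈ Ioc b c, (1 : ℝ) / i := by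
  have H_eq_sum_Ioc : ∀ k, H k = ∑ i ∈ Ioc 0 k, (1 : ℝ) / i := fun k => rfl
  rw [H_eq_sum_Ioc, H_eq_sum_Ioc, ← sum_Ioc_consecutive _ (Nat.zero_le b) hbc, add_sub_cancel_left]

theorem sub_div_le_H_sub_H {a b c : ℕ} (hbc : b ≤ c) (hca : c ≤ a) :
    ((c : ℝ) - b) / a ≤ H c - H b := by
  rw [H_sub_H_eq_sum_Ioc hbc]
  have term_ge : ∀ i ∈ Ioc b c, (1 : ℝ) / a ≤ 1 / i := by
    intro i hi
    obtain ⟨hbi, hic⟩ := mem_Ioc.mp hi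
    exact one_div_le_one_div_of_le (by exact_mod_cast hbi.trans_le' b.zero_le)
      (by exact_mod_cast hic.trans hca)
  calc ((c : ℝ) - b) / a = #(Ioc b c) • ((1 : ℝ) / a) := by
        rw [Nat.card_Ioc, nsmul_eq_mul, Nat.cast_sub hbc]
        ring
    _ ≤ ∑ i ∈ Ioc b c, (1 : ℝ) / i := card_nsmul_le_sum _ _ _ term_ge

theorem H_mono : Monotone H := fun b c hbc =>
  sub_nonneg.mp ((div_nonneg (sub_nonneg.mpr (by exact_mod_cast hbc)) c.cast_nonneg).trans
    (sub_div_le_H_sub_H hbc le_rfl))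

theorem div_le_H {n x : ℕ} (hnx : n ≤ x) : (n : ℝ) / x ≤ H n := by
  simpa using sub_div_le_H_sub_H (Nat.zero_le n) hnx

theorem one_le_H {x : ℕ} (hx : 1 ≤ x) : 1 ≤ H x := by
  have hx' : (x : ℝ) ≠ 0 := by exact_mod_cast (Nat.one_le_iff_ne_zero.mp hx)
  simpa [hx'] using div_le_H (le_refl x)

noncomputable def chainPotential (n x : ℕ) : ℝ := if x ≤ n then H x else H n + 1 - n / x

theorem chainPotential_le (n x : ℕ) : chainPotential n x ≤ H n + 1 := by
  unfold chainPotential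
  split_ifs with hxn
  · linarith [H_mono hxn]
  · linarith [show (0 : ℝ) ≤ n / x by positivity]

theorem one_le_chainPotential (n : ℕ) {x : ℕ} (hx : 1 ≤ x) : 1 ≤ chainPotential n x := by
  unfold chainPotential
  split_ifs with hxn
  · exact one_le_H hx
  · linarith [div_le_H (not_le.mp hxn).le]

theorem sub_div_le_chainPotential_sub {n a b : ℕ} (hba : b ≤ a) (hbn : b ≤ n) :
    ((a : ℝ) - b) / a ≤ chainPotential n a - chainPotential n b := by
  unfold chainPotential
  rw [if_pos hbn]
  split_ifs with han
  · exact sub_div_le_H_sub_H hba le_rfl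
  · have hna : n ≤ a := (not_le.mp han).le
    have ha : (a : ℝ) ≠ 0 := by exact_mod_cast (hbn.trans_lt (not_le.mp han)).ne_bot
    have split_drop : ((a : ℝ) - b) / a = (n - b) / a + (1 - n / a) := by
      field_simp
      ring
    linarith [sub_div_le_H_sub_H hbn hna]

theorem telescoping_chain_bound_general {U : Type*} (n m : ℕ)
    (Q : ℕ → Finset U)
    (hne : ∀ j, j ≤ m → (Q j).Nonempty)
    (hmono : ∀ j, 1 ≤ j → j ≤ m → Q j ⊆ Q (j - 1))
    (hdich : ∀ j, 1 ≤ j → j ≤ m → Q j = Q (j - 1) ∨ (Q j).card ≤ n) :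
    ∑ j ∈ Finset.Icc 1 m,
        (((Q (j - 1)).card : ℝ) - ((Q j).card : ℝ)) / ((Q (j - 1)).card : ℝ) ≤ H n := by
  have step : ∀ j ∈ Icc 1 m, (((Q (j - 1)).card : ℝ) - (Q j).card) / (Q (j - 1)).card ≤
      chainPotential n (Q (j - 1)).card - chainPotential n (Q j).card := by
    intro j hj
    obtain ⟨hj1, hjm⟩ := mem_Icc.mp hj
    rcases hdich j hj1 hjm with heq | hsmall
    · simp [heq]
    · exact sub_div_le_chainPotential_sub (card_le_card (hmono j hj1 hjm)) hsmall
  calc _ ≤ chainPotential n (Q 0).card - chainPotential n (Q m).card :=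
        sum_Icc_one_le_sub_of_le_sub (g := fun j => chainPotential n (Q j).card) step
    _ ≤ H n := by
        linarith [chainPotential_le n (Q 0).card,
          one_le_chainPotential n (hne m le_rfl).card_pos]

/-- Telescoping bound for decreasing chains of finite sets: if
`Q₀ ⊇ Q₁ ⊇ ⋯ ⊇ Q_m` is a decreasing chain of nonempty finite sets such that for every
`j ∈ {1,…,m}` either `Q_j = Q_{j-1}` or `|Q_j| ≤ n` (where `n ≥ 1`), then
`Σ_{j=1}^m (|Q_{j-1}| - |Q_j|)/|Q_{j-1}| ≤ H(n)`. -/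
theorem telescoping_chain_bound {U : Type*} (n m : ℕ) (hn : 1 ≤ n)
    (Q : ℕ → Finset U)
    (hne : ∀ j, j ≤ m → (Q j).Nonempty)
    (hmono : ∀ j, 1 ≤ j → j ≤ m → Q j ⊆ Q (j - 1))
    (hdich : ∀ j, 1 ≤ j → j ≤ m → Q j = Q (j - 1) ∨ (Q j).card ≤ n) :
    ∑ j ∈ Finset.Icc 1 m,
        (((Q (j - 1)).card : ℝ) - ((Q j).card : ℝ)) / ((Q (j - 1)).card : ℝ) ≤ H n :=
  telescoping_chain_bound_general n m Q hne hmono hdich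
end

section
/- Explicit 2^{O(k²)} bound for the competitive-ratio recurrence: Let k ≥ 1 and let n₁,…,n_k be natural numbers with 1 ≤ n_ℓ ≤ 2^{ℓ³·2^ℓ} for every ℓ ∈ {1,…,k}. Define c_k = H(n_k) + 1 and, for 1 ≤ ℓ < k, c_ℓ = (H(n_ℓ) + 1)·(c_{ℓ+1} + 1). Then c₁ ≤ 2^{8k²}. -/
lemma H_eq_harmonic (n : ℕ) : H n = harmonic n := by
  simp [H, harmonic_eq_sum_Icc, one_div]

lemma H_nonneg (n : ℕ) : 0 ≤ H n :=
  Finset.sum_nonneg fun _ _ => by positivity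

lemma H_add_one_le_of_le_two_pow {m e : ℕ} (hm : m ≤ 2 ^ e) : H m + 1 ≤ e + 2 := by
  have hlog : Real.log m ≤ e := by
    rcases m.eq_zero_or_pos with rfl | hpos
    · simp
    calc Real.log m ≤ Real.log ((2 : ℝ) ^ e) :=
          Real.log_le_log (by exact_mod_cast hpos) (by exact_mod_cast hm)
      _ = e * Real.log 2 := Real.log_pow _ _
      _ ≤ e * 1 := by gcongr; linarith [Real.log_two_lt_d9]
      _ = e := mul_one _
  linarith [H_eq_harmonic m ▸ harmonic_le_one_add_log m]

lemma Nat.cube_mul_two_pow_lt (ℓ : ℕ) : ℓ ^ 3 * 2 ^ ℓ < 2 ^ (4 * ℓ) := by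
  calc ℓ ^ 3 * 2 ^ ℓ < (2 ^ ℓ) ^ 3 * 2 ^ ℓ := by
        gcongr
        exact Nat.lt_two_pow_self
    _ = 2 ^ (4 * ℓ) := by ring

lemma H_add_one_le_two_pow_of_le {m ℓ : ℕ} (hm : m ≤ 2 ^ (ℓ ^ 3 * 2 ^ ℓ)) :
    H m + 1 ≤ 2 ^ (4 * ℓ + 1) := by
  have hnat : ℓ ^ 3 * 2 ^ ℓ + 2 ≤ 2 ^ (4 * ℓ + 1) := by
    have hsucc : 2 ^ (4 * ℓ + 1) = 2 * 2 ^ (4 * ℓ) := by ring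
    have := Nat.cube_mul_two_pow_lt ℓ
    have := Nat.one_le_two_pow (n := 4 * ℓ)
    omega
  calc H m + 1 ≤ (ℓ ^ 3 * 2 ^ ℓ : ℕ) + 2 := H_add_one_le_of_le_two_pow hm
    _ ≤ 2 ^ (4 * ℓ + 1) := by exact_mod_cast hnat

lemma recurrence_le_pow {m k : ℕ} {a c : ℕ → ℝ} {B : ℝ}
    (ha : ∀ ℓ, m ≤ ℓ → ℓ ≤ k → 1 ≤ a ℓ) (haB : ∀ ℓ, m ≤ ℓ → ℓ ≤ k → a ℓ ≤ B)
    (hck : c k = a k) (hrec : ∀ ℓ, m ≤ ℓ → ℓ < k → c ℓ = a ℓ * (c (ℓ + 1) + 1))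
    {ℓ : ℕ} (hmℓ : m ≤ ℓ) (hℓk : ℓ ≤ k) :
    1 ≤ c ℓ ∧ c ℓ ≤ (2 * B) ^ (k - ℓ) * B := by
  induction hℓk using Nat.decreasingInduction with
  | self => simpa [hck] using ⟨ha k hmℓ le_rfl, haB k hmℓ le_rfl⟩
  | of_succ ℓ hℓk ih =>
    obtain ⟨hc1, hcB⟩ := ih (by omega)
    have ha1 := ha ℓ hmℓ hℓk.le
    have haB := haB ℓ hmℓ hℓk.le
    have hB : 0 ≤ B := by linarith
    rw [hrec ℓ hmℓ hℓk]
    constructor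
    · nlinarith
    · calc a ℓ * (c (ℓ + 1) + 1) ≤ B * (2 * ((2 * B) ^ (k - (ℓ + 1)) * B)) := by
            gcongr
            linarith
        _ = (2 * B) ^ (k - (ℓ + 1) + 1) * B := by ring
        _ = (2 * B) ^ (k - ℓ) * B := by rw [Nat.sub_add_eq, Nat.sub_add_cancel (by omega)]

theorem explicit_competitive_ratio_bound_general (k : ℕ) (hk : 1 ≤ k) (n : ℕ → ℕ)
    (hn2 : ∀ ℓ, 1 ≤ ℓ → ℓ ≤ k → n ℓ ≤ 2 ^ (ℓ ^ 3 * 2 ^ ℓ))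
    (c : ℕ → ℝ)
    (hck : c k = H (n k) + 1)
    (hrec : ∀ ℓ, 1 ≤ ℓ → ℓ < k → c ℓ = (H (n ℓ) + 1) * (c (ℓ + 1) + 1)) :
    c 1 ≤ 2 ^ (8 * k ^ 2) := by
  set B : ℝ := 2 ^ (4 * k + 1)
  have hfactor : ∀ ℓ, 1 ≤ ℓ → ℓ ≤ k → H (n ℓ) + 1 ≤ B := fun ℓ h1 hℓ =>
    (H_add_one_le_two_pow_of_le (hn2 ℓ h1 hℓ)).trans
      (pow_le_pow_right₀ one_le_two (by omega))
  obtain ⟨-, hc⟩ := recurrence_le_pow (a := fun ℓ => H (n ℓ) + 1)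
    (fun ℓ _ _ => by linarith [H_nonneg (n ℓ)]) hfactor hck hrec le_rfl hk
  have hB : 0 ≤ B := by positivity
  calc c 1 ≤ (2 * B) ^ (k - 1) * B := hc
    _ ≤ (2 * B) ^ (k - 1) * (2 * B) := by gcongr; linarith
    _ = (2 * B) ^ k := by rw [← pow_succ, Nat.sub_add_cancel hk]
    _ = 2 ^ ((4 * k + 2) * k) := by rw [pow_mul, pow_succ']
    _ ≤ 2 ^ (8 * k ^ 2) := pow_le_pow_right₀ one_le_two (by nlinarith)

/-- Explicit `2^{O(k²)}` bound for the competitive-ratio recurrence: if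
`1 ≤ n_ℓ ≤ 2^{ℓ³·2^ℓ}` for every `ℓ ∈ {1,…,k}`, `c_k = H(n_k) + 1` and
`c_ℓ = (H(n_ℓ) + 1)(c_{ℓ+1} + 1)` for `1 ≤ ℓ < k`, then `c₁ ≤ 2^{8k²}`. -/
theorem explicit_competitive_ratio_bound (k : ℕ) (hk : 1 ≤ k) (n : ℕ → ℕ)
    (hn1 : ∀ ℓ, 1 ≤ ℓ → ℓ ≤ k → 1 ≤ n ℓ)
    (hn2 : ∀ ℓ, 1 ≤ ℓ → ℓ ≤ k → n ℓ ≤ 2 ^ (ℓ ^ 3 * 2 ^ ℓ))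
    (c : ℕ → ℝ)
    (hck : c k = H (n k) + 1)
    (hrec : ∀ ℓ, 1 ≤ ℓ → ℓ < k → c ℓ = (H (n ℓ) + 1) * (c (ℓ + 1) + 1)) :
    c 1 ≤ 2 ^ (8 * k ^ 2) :=
  explicit_competitive_ratio_bound_general k hk n hn2 c hck hrec
end
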